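/- With the transformation of the previous statement, if the original protocol p is correct then the transformed protocol p' is correct: every test+ block of p' is supported and every test- block of p' is supported or standalone. -/
import Mathlib


/-- Operations with the set in a protocol. -/
inductive SAOp : Type
  | ins   -- `in`
  | del   -- `out`
  | testp -- `test+`
  | testm -- `test-`
deriving DecidableEq

/-- The sequence of set contents determined by a protocol `(u_i, op_i)`:
`S₀ = ∅`; `in` adds the query word, `out` removes it, tests leave the set
unchanged.  `setContents u op i` is the set content after the first `i`
operations. -/
def setContents {Γ : Type} (u : ℕ → List Γ) (op : ℕ → SAOp) : ℕ → Set (List Γ)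
  | 0 => ∅
  | i + 1 =>
    match op i with
    | SAOp.ins => setContents u op i ∪ {u i}
    | SAOp.del => setContents u op i \ {u i}
    | _ => setContents u op i

/-- A protocol of length `t` is correct if each `test+` query word is in the
current set content and each `test-` query word is not. -/
def CorrectProtocol {Γ : Type} (u : ℕ → List Γ) (op : ℕ → SAOp) (t : ℕ) : Prop :=
  ∀ i < t, (op i = SAOp.testp → u i ∈ setContents u op i) ∧
           (op i = SAOp.testm → u i ∉ setContents u op i)

/-- Block `i` supports block `j`: same query word, `in`/`test+` or `out`/`test-`,
and no intermediate `in`/`out` block with the same query word. -/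
def Supports {Γ : Type} (u : ℕ → List Γ) (op : ℕ → SAOp) (i j : ℕ) : Prop :=
  i < j ∧ u i = u j ∧
  ((op i = SAOp.ins ∧ op j = SAOp.testp) ∨ (op i = SAOp.del ∧ op j = SAOp.testm)) ∧
  ∀ k, i < k → k < j → u k = u i → op k ≠ SAOp.ins ∧ op k ≠ SAOp.del

/-- Block `j` (with operation `out` or `test-`) is standalone: it has no support
and no earlier `in`-block has the same query word. -/
def Standalone {Γ : Type} (u : ℕ → List Γ) (op : ℕ → SAOp) (j : ℕ) : Prop :=
  (op j = SAOp.del ∨ op j = SAOp.testm) ∧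
  (¬ ∃ i, Supports u op i j) ∧
  ∀ k < j, ¬ (u k = u j ∧ op k = SAOp.ins)

/-- The elementary language `R_I`: words belonging to exactly the `R(i)` with `i ∈ I`. -/
def elemLang {N : ℕ} {Γ : Type} (R : Fin N → Set (List Γ)) (I : Set (Fin N)) :
    Set (List Γ) :=
  (⋂ i ∈ I, R i) ∩ (⋂ i ∈ Iᶜ, (R i)ᶜ)

/-- The type of a word: the set of indices of the languages containing it. -/
def wordType {N : ℕ} {Γ : Type} (R : Fin N → Set (List Γ)) (w : List Γ) :
    Set (Fin N) :=
  {i | w ∈ R i}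

open Classical in
/-- The second protocol transformation `p → p''`: query words of type `I` with
`|R_I| ≥ 2` are replaced by the chosen word `u_I` in `in`/`test+` blocks and by
`v_I` in `out`/`test-` blocks; words in singleton elementary languages are
unchanged; operations are unchanged. -/
noncomputable def transformWord {N : ℕ} {Γ : Type} (R : Fin N → Set (List Γ))
    (uI vI : Set (Fin N) → List Γ) (u : ℕ → List Γ) (op : ℕ → SAOp) (i : ℕ) :
    List Γ :=
  if (elemLang R (wordType R (u i))).Subsingleton then u i
  else if op i = SAOp.ins ∨ op i = SAOp.testp then uI (wordType R (u i))
  else vI (wordType R (u i))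


section Helpers
variable {N : ℕ} {Γ : Type}

lemma mem_elemLang_wordType (R : Fin N → Set (List Γ)) (w : List Γ) :
    w ∈ elemLang R (wordType R w) := by
  constructor
  · simp only [Set.mem_iInter]
    intro i hi; exact hi
  · simp only [Set.mem_iInter, Set.mem_compl_iff]
    intro i hi; exact hi

lemma wordType_eq_of_mem {R : Fin N → Set (List Γ)} {I : Set (Fin N)} {w : List Γ}
    (hw : w ∈ elemLang R I) : wordType R w = I := by
  obtain ⟨h1, h2⟩ := hw
  simp only [Set.mem_iInter, Set.mem_compl_iff] at h1 h2
  ext i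
  constructor
  · intro hwi
    by_contra hiI
    exact h2 i hiI hwi
  · exact h1 i

lemma exists_greatest {P : ℕ → Prop} : ∀ {j : ℕ}, (∃ k < j, P k) →
    ∃ i < j, P i ∧ ∀ k, i < k → k < j → ¬ P k := by
  intro j
  induction j with
  | zero => rintro ⟨k, hk, -⟩; omega
  | succ n ih =>
    rintro ⟨k, hk, hPk⟩
    by_cases hn : P n
    · exact ⟨n, Nat.lt_succ_self n, hn, fun m h1 h2 => by omega⟩
    · have hkn : k < n := by
        rcases Nat.lt_succ_iff_lt_or_eq.mp hk with h | h
        · exact h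
        · exact absurd (h ▸ hPk) hn
      obtain ⟨i, hi, hPi, hmax⟩ := ih ⟨k, hkn, hPk⟩
      refine ⟨i, by omega, hPi, fun m h1 h2 => ?_⟩
      by_cases hm : m = n
      · exact hm ▸ hn
      · exact hmax m h1 (by omega)

lemma notMem_setContents (u : ℕ → List Γ) (op : ℕ → SAOp) (w : List Γ) :
    ∀ j, (∀ k < j, u k = w → op k ≠ SAOp.ins) → w ∉ setContents u op j := by
  intro j
  induction j with
  | zero => intro _ h; simp [setContents] at h
  | succ n ih =>
    intro h hw
    have hrest : ∀ k < n, u k = w → op k ≠ SAOp.ins := fun k hk => h k (by omega)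
    cases hop : op n with
    | ins =>
      simp only [setContents, hop] at hw
      rcases hw with hw | hw
      · exact ih hrest hw
      · exact h n (Nat.lt_succ_self n) hw.symm hop
    | del => simp only [setContents, hop] at hw; exact ih hrest hw.1
    | testp => simp only [setContents, hop] at hw; exact ih hrest hw
    | testm => simp only [setContents, hop] at hw; exact ih hrest hw

lemma setContents_last (u : ℕ → List Γ) (op : ℕ → SAOp) (w : List Γ) {i : ℕ}
    (hui : u i = w) (hmod : op i = SAOp.ins ∨ op i = SAOp.del) :
    ∀ j, i < j →
    (∀ k, i < k → k < j → u k = w → op k ≠ SAOp.ins ∧ op k ≠ SAOp.del) →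
    (w ∈ setContents u op j ↔ op i = SAOp.ins) := by
  intro j hij
  induction j with
  | zero => omega
  | succ n ih =>
    intro hlast
    by_cases hin : i = n
    · subst hin
      rcases hmod with hop | hop
      · simp [setContents, hop, hui]
      · simp only [setContents, hop]
        constructor
        · rintro ⟨-, hw⟩; exact absurd hui.symm hw
        · intro h; exact absurd h (by decide)
    · have hin' : i < n := by omega
      have hrest : ∀ k, i < k → k < n → u k = w → op k ≠ SAOp.ins ∧ op k ≠ SAOp.del :=
        fun k h1 h2 => hlast k h1 (by omega)
      have IH := ih hin' hrest
      by_cases hun : u n = w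
      · have hn := hlast n hin' (Nat.lt_succ_self n) hun
        cases hop : op n with
        | ins => exact absurd hop hn.1
        | del => exact absurd hop hn.2
        | testp => simpa only [setContents, hop] using IH
        | testm => simpa only [setContents, hop] using IH
      · cases hop : op n with
        | ins =>
          simp only [setContents, hop, Set.union_singleton, Set.mem_insert_iff]
          rw [← IH]
          constructor
          · rintro (h | h)
            · exact absurd h.symm hun
            · exact h
          · exact Or.inr
        | del =>
          simp only [setContents, hop, Set.mem_diff, Set.mem_singleton_iff]
          rw [← IH]
          constructor
          · exact fun h => h.1
          · exact fun h => ⟨h, fun e => hun e.symm⟩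
        | testp => simpa only [setContents, hop] using IH
        | testm => simpa only [setContents, hop] using IH

end Helpers

section Transform
variable {N : ℕ} {Γ : Type} {R : Fin N → Set (List Γ)} {uI vI : Set (Fin N) → List Γ}
  {u : ℕ → List Γ} {op : ℕ → SAOp}

lemma transform_eq_uI
    (hchoice : ∀ I : Set (Fin N), ¬ (elemLang R I).Subsingleton →
      uI I ∈ elemLang R I ∧ vI I ∈ elemLang R I ∧ uI I ≠ vI I)
    {j k : ℕ} (hs : ¬ (elemLang R (wordType R (u j))).Subsingleton)
    (h : transformWord R uI vI u op k = uI (wordType R (u j))) :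
    wordType R (u k) = wordType R (u j) ∧ (op k = SAOp.ins ∨ op k = SAOp.testp) := by
  obtain ⟨huT, hvT, hne⟩ := hchoice _ hs
  unfold transformWord at h
  split_ifs at h with h1 h2
  · have hT : wordType R (u k) = wordType R (u j) := by
      rw [h]; exact wordType_eq_of_mem huT
    exact ((hs (hT ▸ h1))).elim
  · obtain ⟨huk, -, -⟩ := hchoice _ h1
    have hT : wordType R (u k) = wordType R (u j) := by
      rw [← wordType_eq_of_mem huk, h, wordType_eq_of_mem huT]
    exact ⟨hT, h2⟩
  · obtain ⟨-, hvk, -⟩ := hchoice _ h1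
    have hT : wordType R (u k) = wordType R (u j) := by
      rw [← wordType_eq_of_mem hvk, h, wordType_eq_of_mem huT]
    rw [hT] at h
    exact (hne h.symm).elim

lemma transform_eq_vI
    (hchoice : ∀ I : Set (Fin N), ¬ (elemLang R I).Subsingleton →
      uI I ∈ elemLang R I ∧ vI I ∈ elemLang R I ∧ uI I ≠ vI I)
    {j k : ℕ} (hs : ¬ (elemLang R (wordType R (u j))).Subsingleton)
    (h : transformWord R uI vI u op k = vI (wordType R (u j))) :
    wordType R (u k) = wordType R (u j) ∧ (op k = SAOp.del ∨ op k = SAOp.testm) := by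
  obtain ⟨huT, hvT, hne⟩ := hchoice _ hs
  unfold transformWord at h
  split_ifs at h with h1 h2
  · have hT : wordType R (u k) = wordType R (u j) := by
      rw [h]; exact wordType_eq_of_mem hvT
    exact ((hs (hT ▸ h1))).elim
  · obtain ⟨huk, -, -⟩ := hchoice _ h1
    have hT : wordType R (u k) = wordType R (u j) := by
      rw [← wordType_eq_of_mem huk, h, wordType_eq_of_mem hvT]
    rw [hT] at h
    exact (hne h).elim
  · obtain ⟨-, hvk, -⟩ := hchoice _ h1
    have hT : wordType R (u k) = wordType R (u j) := by
      rw [← wordType_eq_of_mem hvk, h, wordType_eq_of_mem hvT]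
    refine ⟨hT, ?_⟩
    cases hop : op k with
    | ins => exact absurd (Or.inl hop) h2
    | testp => exact absurd (Or.inr hop) h2
    | del => exact Or.inl rfl
    | testm => exact Or.inr rfl

/-- value of the transform on a positive block with non-subsingleton type -/
lemma transform_pos_val {k : ℕ}
    (hs : ¬ (elemLang R (wordType R (u k))).Subsingleton)
    (hop : op k = SAOp.ins ∨ op k = SAOp.testp) :
    transformWord R uI vI u op k = uI (wordType R (u k)) := by
  unfold transformWord
  rw [if_neg hs, if_pos hop]

lemma transform_neg_val {k : ℕ}
    (hs : ¬ (elemLang R (wordType R (u k))).Subsingleton)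
    (hop : op k = SAOp.del ∨ op k = SAOp.testm) :
    transformWord R uI vI u op k = vI (wordType R (u k)) := by
  unfold transformWord
  rw [if_neg hs, if_neg]
  rcases hop with h | h <;> rw [h] <;> rintro (h' | h') <;> cases h'

lemma transform_sub_val {k : ℕ}
    (hs : (elemLang R (wordType R (u k))).Subsingleton) :
    transformWord R uI vI u op k = u k := by
  unfold transformWord
  rw [if_pos hs]

/-- in the subsingleton case, the transformed word equals `u j` only for words
equal to `u j` -/
lemma transform_eq_self
    (hchoice : ∀ I : Set (Fin N), ¬ (elemLang R I).Subsingleton →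
      uI I ∈ elemLang R I ∧ vI I ∈ elemLang R I ∧ uI I ≠ vI I)
    {j k : ℕ} (hs : (elemLang R (wordType R (u j))).Subsingleton)
    (h : transformWord R uI vI u op k = u j) : u k = u j := by
  unfold transformWord at h
  split_ifs at h with h1 h2
  · exact h
  · obtain ⟨huk, -, -⟩ := hchoice _ h1
    have hT : wordType R (u k) = wordType R (u j) := by
      rw [← wordType_eq_of_mem huk, h]
    exact absurd (hT ▸ hs) h1
  · obtain ⟨-, hvk, -⟩ := hchoice _ h1
    have hT : wordType R (u k) = wordType R (u j) := by
      rw [← wordType_eq_of_mem hvk, h]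
    exact absurd (hT ▸ hs) h1

lemma transform_sub_eq {j k : ℕ}
    (hs : (elemLang R (wordType R (u j))).Subsingleton)
    (h : u k = u j) : transformWord R uI vI u op k = u j := by
  have hT : wordType R (u k) = wordType R (u j) := by rw [h]
  unfold transformWord
  rw [if_pos (hT ▸ hs)]
  exact h

end Transform
/-- if the original protocol is correct, then the transformed
protocol is correct: every `test+` block of the transformed protocol is supported
and every `test-` block is supported or standalone. -/
theorem transformed_protocol_correct {N : ℕ} {Γ : Type} [Finite Γ]
    (R : Fin N → Set (List Γ)) (uI vI : Set (Fin N) → List Γ)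
    (hchoice : ∀ I : Set (Fin N), ¬ (elemLang R I).Subsingleton →
      uI I ∈ elemLang R I ∧ vI I ∈ elemLang R I ∧ uI I ≠ vI I)
    (u : ℕ → List Γ) (op : ℕ → SAOp) (t : ℕ)
    (hcorr : CorrectProtocol u op t) :
    (∀ j < t, op j = SAOp.testp →
        ∃ i, Supports (transformWord R uI vI u op) op i j) ∧
    (∀ j < t, op j = SAOp.testm →
        (∃ i, Supports (transformWord R uI vI u op) op i j) ∨
          Standalone (transformWord R uI vI u op) op j) := by
  classical
  set u' := transformWord R uI vI u op with hu'
  constructor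
  · -- test+ blocks
    intro j hj hopj
    have hmemj : u j ∈ setContents u op j := (hcorr j hj).1 hopj
    have hex : ∃ k, k < j ∧ u k = u j ∧ op k = SAOp.ins := by
      by_contra hcon
      push_neg at hcon
      exact notMem_setContents u op (u j) j (fun k hk he => hcon k hk he) hmemj
    obtain ⟨k0, hk0, huk0, hopk0⟩ := hex
    have hP0 : u' k0 = u' j := by
      by_cases hs : (elemLang R (wordType R (u j))).Subsingleton
      · rw [hu', transform_sub_eq hs huk0, transform_sub_val hs]
      · have hsk : ¬ (elemLang R (wordType R (u k0))).Subsingleton := by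
          rw [show wordType R (u k0) = wordType R (u j) from by rw [huk0]]
          exact hs
        rw [hu', transform_pos_val hsk (Or.inl hopk0),
          transform_pos_val hs (Or.inr hopj), huk0]
    obtain ⟨i, hij, ⟨himod, hiw⟩, hmax⟩ :=
      exists_greatest (P := fun k => (op k = SAOp.ins ∨ op k = SAOp.del) ∧ u' k = u' j)
        ⟨k0, hk0, Or.inl hopk0, hP0⟩
    have hopi : op i = SAOp.ins := by
      by_cases hs : (elemLang R (wordType R (u j))).Subsingleton
      · have huj' : u' j = u j := transform_sub_val hs
        have hui : u i = u j := transform_eq_self hchoice hs (hiw.trans huj')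
        have hni : ∀ k, i < k → k < j → u k = u j →
            op k ≠ SAOp.ins ∧ op k ≠ SAOp.del := by
          intro k h1 h2 he
          have hPk : u' k = u' j := by
            rw [hu', transform_sub_eq hs he]; exact huj'.symm
          exact ⟨fun hc => hmax k h1 h2 ⟨Or.inl hc, hPk⟩,
                 fun hc => hmax k h1 h2 ⟨Or.inr hc, hPk⟩⟩
        exact (setContents_last u op (u j) hui himod j hij hni).mp hmemj
      · have huj' : u' j = uI (wordType R (u j)) := transform_pos_val hs (Or.inr hopj)
        have := transform_eq_uI hchoice hs (hu' ▸ (hiw.trans huj'))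
        rcases himod with h | h
        · exact h
        · rcases this.2 with h' | h' <;> rw [h] at h' <;> cases h'
    refine ⟨i, hij, hiw, Or.inl ⟨hopi, hopj⟩, fun k h1 h2 hw => ?_⟩
    exact ⟨fun hc => hmax k h1 h2 ⟨Or.inl hc, hw.trans hiw⟩,
           fun hc => hmax k h1 h2 ⟨Or.inr hc, hw.trans hiw⟩⟩
  · -- test- blocks
    intro j hj hopj
    have hnot : u j ∉ setContents u op j := (hcorr j hj).2 hopj
    by_cases hex : ∃ k, k < j ∧ (op k = SAOp.ins ∨ op k = SAOp.del) ∧ u' k = u' j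
    · left
      obtain ⟨i, hij, ⟨himod, hiw⟩, hmax⟩ :=
        exists_greatest (P := fun k => (op k = SAOp.ins ∨ op k = SAOp.del) ∧ u' k = u' j)
          hex
      have hopi : op i = SAOp.del := by
        by_cases hs : (elemLang R (wordType R (u j))).Subsingleton
        · have huj' : u' j = u j := transform_sub_val hs
          have hui : u i = u j := transform_eq_self hchoice hs (hiw.trans huj')
          have hni : ∀ k, i < k → k < j → u k = u j →
              op k ≠ SAOp.ins ∧ op k ≠ SAOp.del := by
            intro k h1 h2 he
            have hPk : u' k = u' j := by
              rw [hu', transform_sub_eq hs he]; exact huj'.symm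
            exact ⟨fun hc => hmax k h1 h2 ⟨Or.inl hc, hPk⟩,
                   fun hc => hmax k h1 h2 ⟨Or.inr hc, hPk⟩⟩
          rcases himod with h | h
          · exact absurd ((setContents_last u op (u j) hui (Or.inl h) j hij hni).mpr h) hnot
          · exact h
        · have huj' : u' j = vI (wordType R (u j)) := transform_neg_val hs (Or.inr hopj)
          have := transform_eq_vI hchoice hs (hu' ▸ (hiw.trans huj'))
          rcases himod with h | h
          · rcases this.2 with h' | h' <;> rw [h] at h' <;> cases h'
          · exact h
      refine ⟨i, hij, hiw, Or.inr ⟨hopi, hopj⟩, fun k h1 h2 hw => ?_⟩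
      exact ⟨fun hc => hmax k h1 h2 ⟨Or.inl hc, hw.trans hiw⟩,
             fun hc => hmax k h1 h2 ⟨Or.inr hc, hw.trans hiw⟩⟩
    · right
      refine ⟨Or.inr hopj, ?_, ?_⟩
      · rintro ⟨i, hij, hiw, hor, -⟩
        rcases hor with ⟨h1, h2⟩ | ⟨h1, h2⟩
        · rw [hopj] at h2; cases h2
        · exact hex ⟨i, hij, Or.inr h1, hiw⟩
      · rintro k hk ⟨hw, hins⟩
        exact hex ⟨k, hk, Or.inl hins, hw⟩
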